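/- Let M(y_1,...,y_8) = Σ_B y^B be the basis-generating polynomial of the Vámos matroid V_8. Then ΔM{1,2} := M₁M₂ − M₁₂M is a sum of squares of real polynomials (explicitly, a sum of twelve squares with coefficients ¼ and ⅛), and consequently ΔM{1,2}(y) ≥ 0 for all real y ∈ ℝ⁸. -/
import Mathlib


open MvPolynomial

set_option maxHeartbeats 2000000
set_option maxRecDepth 10000

/-- The deletion `Z^e`: the polynomial `Z` with `y_e` set to `0`. -/
noncomputable def del {m : ℕ} (e : Fin m) (Z : MvPolynomial (Fin m) ℝ) : MvPolynomial (Fin m) ℝ :=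
  aeval (fun i => if i = e then (0 : MvPolynomial (Fin m) ℝ) else X i) Z

/-- Multiaffine: every variable occurs to at most the first power. -/
def Multiaffine {m : ℕ} (Z : MvPolynomial (Fin m) ℝ) : Prop :=
  ∀ e : Fin m, Z.degreeOf e ≤ 1


/-- The basis-generating polynomial of the Vámos matroid `V_8`: the rank-4 matroid
on `{1,...,8}` (encoded as `0,...,7 : Fin 8`) whose bases are all 4-element
subsets except the five circuit-hyperplanes
`{1,2,3,4}, {1,3,5,6}, {1,3,7,8}, {2,4,5,6}, {2,4,7,8}`
(a labelling of the Vámos matroid in which the structural pairs are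
`{1,3}, {2,4}, {5,6}, {7,8}`). -/
noncomputable def MV8 : MvPolynomial (Fin 8) ℝ :=
  ∑ B ∈ (Finset.univ : Finset (Fin 8)).powersetCard 4 \
      ({ {0,1,2,3}, {0,2,4,5}, {0,2,6,7}, {1,3,4,5}, {1,3,6,7} } :
        Finset (Finset (Fin 8))),
    ∏ e ∈ B, X e

lemma pd_ne (i j : Fin 8) (h : j ≠ i) : pderiv i (X j : MvPolynomial (Fin 8) ℝ) = 0 :=
  pderiv_X_of_ne h

lemma mv8_eq : MV8 = (X 4 * X 5 * X 6 * X 7 + X 3 * X 5 * X 6 * X 7 + X 3 * X 4 * X 6 * X 7 + X 3 * X 4 * X 5 * X 7 + X 3 * X 4 * X 5 * X 6 + X 2 * X 5 * X 6 * X 7 + X 2 * X 4 * X 6 * X 7 + X 2 * X 4 * X 5 * X 7 + X 2 * X 4 * X 5 * X 6 + X 2 * X 3 * X 6 * X 7 + X 2 * X 3 * X 5 * X 7 + X 2 * X 3 * X 5 * X 6 + X 2 * X 3 * X 4 * X 7 + X 2 * X 3 * X 4 * X 6 + X 2 * X 3 * X 4 * X 5 + X 1 * X 5 * X 6 * X 7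 + X 1 * X 4 * X 6 * X 7 + X 1 * X 4 * X 5 * X 7 + X 1 * X 4 * X 5 * X 6 + X 1 * X 3 * X 5 * X 7 + X 1 * X 3 * X 5 * X 6 + X 1 * X 3 * X 4 * X 7 + X 1 * X 3 * X 4 * X 6 + X 1 * X 2 * X 6 * X 7 + X 1 * X 2 * X 5 * X 7 + X 1 * X 2 * X 5 * X 6 + X 1 * X 2 * X 4 * X 7 + X 1 * X 2 * X 4 * X 6 + X 1 * X 2 * X 4 * X 5 + X 1 * X 2 * X 3 * X 7 + X 1 * X 2 * X 3 * X 6 + X 1 * X 2 * X 3 * X 5 + X 1 * X 2 * X 3 * X 4 + X 0 * X 5 * X 6 * X 7 + X 0 * X 4 * X 6 * X 7 + X 0 * X 4 * X 5 * X 7 + X 0 * X 4 * X 5 * X 6 + X 0 * X 3 * X 6 * X 7 + X 0 * X 3 * X 5 * X 7 + X 0 * X 3 * X 5 * X 6 + X 0 * X 3 * X 4 * X 7 + X 0 * X 3 * X 4 * X 6 + X 0 * X 3 * X 4 * X 5 + X 0 * X 2 * X 5 * X 7 + X 0 * X 2 * X 5 * X 6 + X 0 * X 2 * X 4 * X 7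 + X 0 * X 2 * X 4 * X 6 + X 0 * X 2 * X 3 * X 7 + X 0 * X 2 * X 3 * X 6 + X 0 * X 2 * X 3 * X 5 + X 0 * X 2 * X 3 * X 4 + X 0 * X 1 * X 6 * X 7 + X 0 * X 1 * X 5 * X 7 + X 0 * X 1 * X 5 * X 6 + X 0 * X 1 * X 4 * X 7 + X 0 * X 1 * X 4 * X 6 + X 0 * X 1 * X 4 * X 5 + X 0 * X 1 * X 3 * X 7 + X 0 * X 1 * X 3 * X 6 + X 0 * X 1 * X 3 * X 5 + X 0 * X 1 * X 3 * X 4 + X 0 * X 1 * X 2 * X 7 + X 0 * X 1 * X 2 * X 6 + X 0 * X 1 * X 2 * X 5 + X 0 * X 1 * X 2 * X 4 : MvPolynomial (Fin 8) ℝ) := by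
  unfold MV8
  rw [show ((Finset.univ : Finset (Fin 8)).powersetCard 4 \
      ({ {0,1,2,3}, {0,2,4,5}, {0,2,6,7}, {1,3,4,5}, {1,3,6,7} } :
        Finset (Finset (Fin 8)))) = ({{0,1,2,4}, {0,1,2,5}, {0,1,2,6}, {0,1,2,7}, {0,1,3,4}, {0,1,3,5}, {0,1,3,6}, {0,1,3,7}, {0,1,4,5}, {0,1,4,6}, {0,1,4,7}, {0,1,5,6}, {0,1,5,7}, {0,1,6,7}, {0,2,3,4}, {0,2,3,5}, {0,2,3,6}, {0,2,3,7}, {0,2,4,6}, {0,2,4,7}, {0,2,5,6}, {0,2,5,7}, {0,3,4,5}, {0,3,4,6}, {0,3,4,7}, {0,3,5,6}, {0,3,5,7}, {0,3,6,7}, {0,4,5,6}, {0,4,5,7}, {0,4,6,7}, {0,5,6,7}, {1,2,3,4}, {1,2,3,5}, {1,2,3,6}, {1,2,3,7}, {1,2,4,5}, {1,2,4,6}, {1,2,4,7}, {1,2,5,6}, {1,2,5,7}, {1,2,6,7}, {1,3,4,6}, {1,3,4,7}, {1,3,5,6}, {1,3,5,7}, {1,4,5,6}, {1,4,5,7}, {1,4,6,7},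 {1,5,6,7}, {2,3,4,5}, {2,3,4,6}, {2,3,4,7}, {2,3,5,6}, {2,3,5,7}, {2,3,6,7}, {2,4,5,6}, {2,4,5,7}, {2,4,6,7}, {2,5,6,7}, {3,4,5,6}, {3,4,5,7}, {3,4,6,7}, {3,5,6,7}, {4,5,6,7}} : Finset (Finset (Fin 8))) from by decide]
  simp (config := { decide := true }) [Finset.sum_insert, Finset.prod_insert, Finset.sum_singleton]
  ring

lemma pd0 : pderiv 0 MV8 = (X 5 * X 6 * X 7 + X 4 * X 6 * X 7 + X 4 * X 5 * X 7 + X 4 * X 5 * X 6 + X 3 * X 6 * X 7 + X 3 * X 5 * X 7 + X 3 * X 5 * X 6 + X 3 * X 4 * X 7 + X 3 * X 4 * X 6 + X 3 * X 4 * X 5 + X 2 * X 5 * X 7 + X 2 * X 5 * X 6 + X 2 * X 4 * X 7 + X 2 * X 4 * X 6 + X 2 * X 3 * X 7 + X 2 * X 3 * X 6 + X 2 * X 3 * X 5 + X 2 * X 3 * X 4 + X 1 * X 6 * X 7 + X 1 * X 5 * X 7 + X 1 * X 5 * X 6 + X 1 * X 4 * X 7 + X 1 * X 4 * X 6 + X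 1 * X 4 * X 5 + X 1 * X 3 * X 7 + X 1 * X 3 * X 6 + X 1 * X 3 * X 5 + X 1 * X 3 * X 4 + X 1 * X 2 * X 7 + X 1 * X 2 * X 6 + X 1 * X 2 * X 5 + X 1 * X 2 * X 4 : MvPolynomial (Fin 8) ℝ) := by
  rw [mv8_eq]
  simp only [map_add, pderiv_mul, pderiv_X_self,
    pd_ne 0 1 (by decide), pd_ne 0 2 (by decide), pd_ne 0 3 (by decide), pd_ne 0 4 (by decide),
    pd_ne 0 5 (by decide), pd_ne 0 6 (by decide), pd_ne 0 7 (by decide),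
    mul_zero, zero_mul, add_zero, zero_add, mul_one, one_mul]
  all_goals ring

lemma pd1 : pderiv 1 MV8 = (X 5 * X 6 * X 7 + X 4 * X 6 * X 7 + X 4 * X 5 * X 7 + X 4 * X 5 * X 6 + X 3 * X 5 * X 7 + X 3 * X 5 * X 6 + X 3 * X 4 * X 7 + X 3 * X 4 * X 6 + X 2 * X 6 * X 7 + X 2 * X 5 * X 7 + X 2 * X 5 * X 6 + X 2 * X 4 * X 7 + X 2 * X 4 * X 6 + X 2 * X 4 * X 5 + X 2 * X 3 * X 7 + X 2 * X 3 * X 6 + X 2 * X 3 * X 5 + X 2 * X 3 * X 4 + X 0 * X 6 * X 7 + X 0 * X 5 * X 7 + X 0 * X 5 * X 6 + X 0 * X 4 * X 7 + X 0 * X 4 * X 6 + X 0 * X 4 * X 5 + X 0 * X 3 * X 7 + X 0 * X 3 * X 6 + X 0 * X 3 * X 5 + X 0 * X 3 * X 4 + X 0 * X 2 * X 7 + X 0 * X 2 * X 6 + X 0 * X 2 * X 5 + X 0 * X 2 * X 4 : MvPolynomial (Fin 8) ℝ) := by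
  rw [mv8_eq]
  simp only [map_add, pderiv_mul, pderiv_X_self,
    pd_ne 1 0 (by decide), pd_ne 1 2 (by decide), pd_ne 1 3 (by decide), pd_ne 1 4 (by decide),
    pd_ne 1 5 (by decide), pd_ne 1 6 (by decide), pd_ne 1 7 (by decide),
    mul_zero, zero_mul, add_zero, zero_add, mul_one, one_mul]
  all_goals ring

lemma pd01 : pderiv 1 (pderiv 0 MV8) = (X 6 * X 7 + X 5 * X 7 + X 5 * X 6 + X 4 * X 7 + X 4 * X 6 + X 4 * X 5 + X 3 * X 7 + X 3 * X 6 + X 3 * X 5 + X 3 * X 4 + X 2 * X 7 + X 2 * X 6 + X 2 * X 5 + X 2 * X 4 : MvPolynomial (Fin 8) ℝ) := by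
  rw [pd0]
  simp only [map_add, pderiv_mul, pderiv_X_self,
    pd_ne 1 0 (by decide), pd_ne 1 2 (by decide), pd_ne 1 3 (by decide), pd_ne 1 4 (by decide),
    pd_ne 1 5 (by decide), pd_ne 1 6 (by decide), pd_ne 1 7 (by decide),
    mul_zero, zero_mul, add_zero, zero_add, mul_one, one_mul]
  all_goals ring

lemma vamos_key :
    pderiv 0 MV8 * pderiv 1 MV8 - pderiv 1 (pderiv 0 MV8) * MV8 =
      (C (1/4 : ℝ) * (X 2 * X 3 * X 4 + X 2 * X 3 * X 5 + X 2 * X 3 * X 6 + X 2 * X 3 * X 7 + X 2 * X 4 * X 6 + X 2 * X 4 * X 7 + X 2 * X 5 * X 6 + X 2 * X 5 * X 7 + X 3 * X 4 * X 6 + X 3 * X 4 * X 7 + X 3 * X 5 * X 6 + X 3 * X 5 * X 7 + X 4 * X 5 * X 6 + X 4 * X 5 * X 7 + X 4 * X 6 * X 7 + X 5 * X 6 * X 7) ^ 2 : MvPolynomial (Fin 8) ℝ)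
      + (C (1/4 : ℝ) * (X 2 * X 3 * X 4 + X 2 * X 3 * X 5 + X 2 * X 3 * X 6 + X 2 * X 3 * X 7 + X 2 * X 4 * X 6 + X 2 * X 4 * X 7 + X 3 * X 5 * X 6 + X 3 * X 5 * X 7) ^ 2 : MvPolynomial (Fin 8) ℝ)
      + (C (1/4 : ℝ) * (X 2 * X 3 * X 4 + X 2 * X 3 * X 5 + X 2 * X 3 * X 6 + X 2 * X 3 * X 7 + X 2 * X 5 * X 6 + X 2 * X 5 * X 7 + X 3 * X 4 * X 7 + X 3 * X 4 * X 6) ^ 2 : MvPolynomial (Fin 8) ℝ)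
      + (C (1/4 : ℝ) * (X 2 * X 3 * X 4 + X 2 * X 3 * X 5 + X 2 * X 3 * X 6 + X 2 * X 3 * X 7 - X 5 * X 6 * X 7 - X 4 * X 6 * X 7 - X 4 * X 5 * X 6 - X 4 * X 5 * X 7) ^ 2 : MvPolynomial (Fin 8) ℝ)
      + (C (1/8 : ℝ) * (X 2 * X 5 * X 6 - X 2 * X 4 * X 7 + X 3 * X 5 * X 6 - X 3 * X 4 * X 7 + X 5 * X 6 * X 7 - X 4 * X 5 * X 7) ^ 2 : MvPolynomial (Fin 8) ℝ)
      + (C (1/8 : ℝ) * (X 2 * X 4 * X 6 - X 2 * X 5 * X 7 - X 3 * X 5 * X 7 + X 3 * X 4 * X 6 + X 4 * X 6 * X 7 - X 4 * X 5 * X 7) ^ 2 : MvPolynomial (Fin 8) ℝ)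
      + (C (1/8 : ℝ) * (X 2 * X 4 * X 6 + X 2 * X 5 * X 6 + X 3 * X 5 * X 7 + X 3 * X 4 * X 7 + X 4 * X 5 * X 6 + X 4 * X 6 * X 7) ^ 2 : MvPolynomial (Fin 8) ℝ)
      + (C (1/8 : ℝ) * (X 2 * X 4 * X 7 + X 2 * X 5 * X 7 + X 3 * X 5 * X 6 + X 3 * X 4 * X 6 + X 4 * X 5 * X 6 + X 5 * X 6 * X 7) ^ 2 : MvPolynomial (Fin 8) ℝ)
      + (C (1/8 : ℝ) * (X 2 * X 5 * X 6 - X 2 * X 4 * X 7 + X 3 * X 5 * X 6 - X 3 * X 4 * X 7 + X 4 * X 5 * X 6 - X 4 * X 6 * X 7) ^ 2 : MvPolynomial (Fin 8) ℝ)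
      + (C (1/8 : ℝ) * (X 2 * X 4 * X 6 - X 2 * X 5 * X 7 - X 3 * X 5 * X 7 + X 3 * X 4 * X 6 + X 4 * X 5 * X 6 - X 5 * X 6 * X 7) ^ 2 : MvPolynomial (Fin 8) ℝ)
      + (C (1/8 : ℝ) * (X 2 * X 4 * X 6 + X 2 * X 5 * X 6 + X 3 * X 5 * X 7 + X 3 * X 4 * X 7 + X 4 * X 5 * X 7 + X 5 * X 6 * X 7) ^ 2 : MvPolynomial (Fin 8) ℝ)
      + (C (1/8 : ℝ) * (X 2 * X 4 * X 7 + X 2 * X 5 * X 7 + X 3 * X 5 * X 6 + X 3 * X 4 * X 6 + X 4 * X 5 * X 7 + X 4 * X 6 * X 7) ^ 2 : MvPolynomial (Fin 8) ℝ) := by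
  rw [pd01, pd0, pd1, mv8_eq]
  apply MvPolynomial.funext
  intro x
  simp only [eval_add, eval_sub, eval_mul, eval_pow, eval_C, eval_X]
  ring

theorem vamos_rayleigh_sos :
    (pderiv 0 MV8 * pderiv 1 MV8 - pderiv 1 (pderiv 0 MV8) * MV8 =
      (C (1/4 : ℝ) * (X 2 * X 3 * X 4 + X 2 * X 3 * X 5 + X 2 * X 3 * X 6 + X 2 * X 3 * X 7 + X 2 * X 4 * X 6 + X 2 * X 4 * X 7 + X 2 * X 5 * X 6 + X 2 * X 5 * X 7 + X 3 * X 4 * X 6 + X 3 * X 4 * X 7 + X 3 * X 5 * X 6 + X 3 * X 5 * X 7 + X 4 * X 5 * X 6 + X 4 * X 5 * X 7 + X 4 * X 6 * X 7 + X 5 * X 6 * X 7) ^ 2 : MvPolynomial (Fin 8) ℝ)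
      + (C (1/4 : ℝ) * (X 2 * X 3 * X 4 + X 2 * X 3 * X 5 + X 2 * X 3 * X 6 + X 2 * X 3 * X 7 + X 2 * X 4 * X 6 + X 2 * X 4 * X 7 + X 3 * X 5 * X 6 + X 3 * X 5 * X 7) ^ 2 : MvPolynomial (Fin 8) ℝ)
      + (C (1/4 : ℝ) * (X 2 * X 3 * X 4 + X 2 * X 3 * X 5 + X 2 * X 3 * X 6 + X 2 * X 3 * X 7 + X 2 * X 5 * X 6 + X 2 * X 5 * X 7 + X 3 * X 4 * X 7 + X 3 * X 4 * X 6) ^ 2 : MvPolynomial (Fin 8) ℝ)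
      + (C (1/4 : ℝ) * (X 2 * X 3 * X 4 + X 2 * X 3 * X 5 + X 2 * X 3 * X 6 + X 2 * X 3 * X 7 - X 5 * X 6 * X 7 - X 4 * X 6 * X 7 - X 4 * X 5 * X 6 - X 4 * X 5 * X 7) ^ 2 : MvPolynomial (Fin 8) ℝ)
      + (C (1/8 : ℝ) * (X 2 * X 5 * X 6 - X 2 * X 4 * X 7 + X 3 * X 5 * X 6 - X 3 * X 4 * X 7 + X 5 * X 6 * X 7 - X 4 * X 5 * X 7) ^ 2 : MvPolynomial (Fin 8) ℝ)
      + (C (1/8 : ℝ) * (X 2 * X 4 * X 6 - X 2 * X 5 * X 7 - X 3 * X 5 * X 7 + X 3 * X 4 * X 6 + X 4 * X 6 * X 7 - X 4 * X 5 * X 7) ^ 2 : MvPolynomial (Fin 8) ℝ)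
      + (C (1/8 : ℝ) * (X 2 * X 4 * X 6 + X 2 * X 5 * X 6 + X 3 * X 5 * X 7 + X 3 * X 4 * X 7 + X 4 * X 5 * X 6 + X 4 * X 6 * X 7) ^ 2 : MvPolynomial (Fin 8) ℝ)
      + (C (1/8 : ℝ) * (X 2 * X 4 * X 7 + X 2 * X 5 * X 7 + X 3 * X 5 * X 6 + X 3 * X 4 * X 6 + X 4 * X 5 * X 6 + X 5 * X 6 * X 7) ^ 2 : MvPolynomial (Fin 8) ℝ)
      + (C (1/8 : ℝ) * (X 2 * X 5 * X 6 - X 2 * X 4 * X 7 + X 3 * X 5 * X 6 - X 3 * X 4 * X 7 + X 4 * X 5 * X 6 - X 4 * X 6 * X 7) ^ 2 : MvPolynomial (Fin 8) ℝ)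
      + (C (1/8 : ℝ) * (X 2 * X 4 * X 6 - X 2 * X 5 * X 7 - X 3 * X 5 * X 7 + X 3 * X 4 * X 6 + X 4 * X 5 * X 6 - X 5 * X 6 * X 7) ^ 2 : MvPolynomial (Fin 8) ℝ)
      + (C (1/8 : ℝ) * (X 2 * X 4 * X 6 + X 2 * X 5 * X 6 + X 3 * X 5 * X 7 + X 3 * X 4 * X 7 + X 4 * X 5 * X 7 + X 5 * X 6 * X 7) ^ 2 : MvPolynomial (Fin 8) ℝ)
      + (C (1/8 : ℝ) * (X 2 * X 4 * X 7 + X 2 * X 5 * X 7 + X 3 * X 5 * X 6 + X 3 * X 4 * X 6 + X 4 * X 5 * X 7 + X 4 * X 6 * X 7) ^ 2 : MvPolynomial (Fin 8) ℝ)) ∧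
    ∀ y : Fin 8 → ℝ,
      0 ≤ eval y (pderiv 0 MV8 * pderiv 1 MV8 - pderiv 1 (pderiv 0 MV8) * MV8) := by
  refine ⟨vamos_key, fun y => ?_⟩
  rw [vamos_key]
  simp only [eval_add, eval_mul, eval_pow, eval_C]
  positivity
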